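/- If K : ℝ → ℂ is integrable on [x,∞) and decays so that |K(y)| ≤ C ∫_{(x+y)/2}^∞ h(z) dz with h ∈ L¹ nonnegative, then the transformation-operator integral ∫_x^∞ K(y) e^{iky} dy converges absolutely for Im k ≥ 0 and defines a continuous function of k on the closed upper half plane, analytic in the open upper half plane. -/

import Mathlib

open Complex MeasureTheory Set

/-!
By Tonelli, `∫_a^∞ ∫_{(a+y)/2}^∞ h(z) dz dy = ∫ 2 (z - a)₊ h(z) dz`, which the first moment
of `h` controls; hence the majorant of `K` is integrable on `[x, ∞)` and `K ∈ L¹[x, ∞)`.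
Writing `e^{iky} = e^{ikx} e^{ik(y-x)}`, the second factor has modulus at most `1` for `y ≥ x`
and `Im k ≥ 0`, so `‖K‖` dominates the integrand on the whole closed upper half plane
(continuity by dominated convergence). On `Im k > δ / 2` the `k`-derivative
`i (y - x) e^{ik(y-x)} K(y)` is dominated by `(2 / δ) ‖K y‖`, since `t e^{-ct} ≤ c⁻¹`.
-/

lemma integrable_of_integrable_one_add_abs_mul {h : ℝ → ℝ}
    (hint : Integrable (fun z => (1 + |z|) * h z)) : Integrable h := by
  have hweight : ∀ z : ℝ, ‖(1 + |z|)⁻¹‖ ≤ 1 := fun z => by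
    rw [norm_inv, Real.norm_of_nonneg (by positivity)]
    exact inv_le_one_of_one_le₀ (by simp)
  refine (hint.bdd_mul ?_ (ae_of_all _ hweight)).congr (ae_of_all _ fun z => ?_)
  · exact (Continuous.inv₀ (by fun_prop) fun z => by positivity).aestronglyMeasurable
  · field_simp

lemma lintegral_Ici_lintegral_Ici_midpoint {g : ℝ → ENNReal} (hg : AEMeasurable g) (a : ℝ) :
    ∫⁻ y in Ici a, ∫⁻ z in Ici ((a + y) / 2), g z =
      ∫⁻ z, ENNReal.ofReal (2 * (z - a)) * g z := by
  set S : Set (ℝ × ℝ) := {p | (a + p.1) / 2 ≤ p.2}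
  have hS : MeasurableSet S := measurableSet_le (by fun_prop) measurable_snd
  calc ∫⁻ y in Ici a, ∫⁻ z in Ici ((a + y) / 2), g z
      = ∫⁻ y in Ici a, ∫⁻ z, S.indicator (fun p => g p.2) (y, z) := by
        simp_rw [← lintegral_indicator measurableSet_Ici]
        rfl
    _ = ∫⁻ z, ∫⁻ y in Ici a, S.indicator (fun p => g p.2) (y, z) :=
        lintegral_lintegral_swap (hg.comp_snd.indicator hS)
    _ = ∫⁻ z, ∫⁻ y in Ici a, (Iic (2 * z - a)).indicator (fun _ => g z) y := by
        refine lintegral_congr fun z => lintegral_congr fun y => ?_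
        have hmid : (a + y) / 2 ≤ z ↔ y ≤ 2 * z - a := by constructor <;> intro <;> linarith
        simp only [S, indicator, mem_ofPred_eq, mem_Iic, hmid]
    _ = ∫⁻ z, ENNReal.ofReal (2 * (z - a)) * g z := by
        refine lintegral_congr fun z => ?_
        rw [lintegral_indicator_const measurableSet_Iic, Measure.restrict_apply measurableSet_Iic,
          Iic_inter_Ici, Real.volume_Icc, mul_comm]
        ring_nf

lemma integrableOn_setIntegral_Ici_midpoint {h : ℝ → ℝ} (hpos : ∀ z, 0 ≤ h z)
    (hint : Integrable (fun z => (1 + |z|) * h z)) (a : ℝ) :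
    IntegrableOn (fun y => ∫ z in Ici ((a + y) / 2), h z) (Ici a) := by
  have hh : Integrable h := integrable_of_integrable_one_add_abs_mul hint
  have hanti : Antitone fun y => ∫ z in Ici ((a + y) / 2), h z := fun s t hst =>
    setIntegral_mono_set hh.integrableOn (ae_of_all _ hpos)
      (Ici_subset_Ici.2 (by linarith)).eventuallyLE
  have hweight : ∀ z : ℝ, ENNReal.ofReal (2 * (z - a)) * ENNReal.ofReal (h z) ≤
      ENNReal.ofReal ((2 + 2 * |a|) * ((1 + |z|) * h z)) := fun z => by
    rw [← ENNReal.ofReal_mul' (hpos z), ← mul_assoc]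
    refine ENNReal.ofReal_le_ofReal (mul_le_mul_of_nonneg_right ?_ (hpos z))
    nlinarith [le_abs_self z, neg_abs_le a, mul_nonneg (abs_nonneg a) (abs_nonneg z)]
  refine ⟨hanti.measurable.aestronglyMeasurable, ?_⟩
  rw [hasFiniteIntegral_iff_ofReal
    (ae_of_all _ fun y => setIntegral_nonneg measurableSet_Ici fun z _ => hpos z)]
  calc ∫⁻ y in Ici a, ENNReal.ofReal (∫ z in Ici ((a + y) / 2), h z)
      = ∫⁻ y in Ici a, ∫⁻ z in Ici ((a + y) / 2), ENNReal.ofReal (h z) :=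
        lintegral_congr fun y => ofReal_integral_eq_lintegral_ofReal hh.integrableOn
          (ae_of_all _ hpos)
    _ = ∫⁻ z, ENNReal.ofReal (2 * (z - a)) * ENNReal.ofReal (h z) :=
        lintegral_Ici_lintegral_Ici_midpoint hh.aemeasurable.ennreal_ofReal a
    _ ≤ ∫⁻ z, ENNReal.ofReal ((2 + 2 * |a|) * ((1 + |z|) * h z)) := lintegral_mono hweight
    _ < ⊤ := (hint.const_mul _).lintegral_lt_top

lemma Real.mul_exp_neg_mul_le_inv {c : ℝ} (hc : 0 < c) (t : ℝ) :
    t * Real.exp (-(c * t)) ≤ c⁻¹ :=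
  calc t * Real.exp (-(c * t)) = c⁻¹ * (c * t * Real.exp (-(c * t))) := by field_simp
    _ ≤ c⁻¹ * 1 := by
        gcongr
        exact (Real.mul_exp_neg_le_exp_neg_one _).trans (Real.exp_le_one_iff.2 (by norm_num))
    _ = c⁻¹ := mul_one _

lemma norm_cexp_I_mul_ofReal (k : ℂ) (t : ℝ) : ‖cexp (I * k * t)‖ = Real.exp (-(k.im * t)) := by
  simp [Complex.norm_exp, Complex.mul_re]

lemma norm_cexp_I_mul_ofReal_le_one {k : ℂ} (hk : 0 ≤ k.im) {t : ℝ} (ht : 0 ≤ t) :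
    ‖cexp (I * k * t)‖ ≤ 1 := by
  rw [norm_cexp_I_mul_ofReal, Real.exp_le_one_iff, neg_nonpos]
  positivity

section UpperHalfPlane

variable {K : ℝ → ℂ} {x : ℝ}

lemma integrableOn_mul_cexp (hK : IntegrableOn K (Ici x)) {k : ℂ} (hk : 0 ≤ k.im) :
    IntegrableOn (fun y : ℝ => K y * cexp (I * k * ↑(y - x))) (Ici x) :=
  hK.mul_bdd (by fun_prop : Continuous fun y : ℝ => cexp (I * k * ↑(y - x))).aestronglyMeasurable
    (ae_restrict_of_forall_mem measurableSet_Ici fun y (hy : x ≤ y) =>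
      norm_cexp_I_mul_ofReal_le_one hk (sub_nonneg.2 hy))

lemma norm_mul_cexp_le {k : ℂ} (hk : 0 ≤ k.im) {y : ℝ} (hy : x ≤ y) :
    ‖K y * cexp (I * k * ↑(y - x))‖ ≤ ‖K y‖ := by
  rw [norm_mul]
  exact mul_le_of_le_one_right (norm_nonneg _)
    (norm_cexp_I_mul_ofReal_le_one hk (sub_nonneg.2 hy))

lemma continuousOn_setIntegral_mul_cexp (hK : IntegrableOn K (Ici x)) :
    ContinuousOn (fun k : ℂ => ∫ y in Ici x, K y * cexp (I * k * ↑(y - x))) {k | 0 ≤ k.im} :=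
  continuousOn_of_dominated (fun _ hk => (integrableOn_mul_cexp hK hk).aestronglyMeasurable)
    (fun _ hk => ae_restrict_of_forall_mem measurableSet_Ici fun _ hy => norm_mul_cexp_le hk hy)
    hK.norm (ae_of_all _ fun y =>
      (by fun_prop : Continuous fun k : ℂ => K y * cexp (I * k * ↑(y - x))).continuousOn)

lemma differentiableOn_setIntegral_mul_cexp (hK : IntegrableOn K (Ici x)) :
    DifferentiableOn ℂ (fun k : ℂ => ∫ y in Ici x, K y * cexp (I * k * ↑(y - x)))
      {k | 0 < k.im} := by
  intro k₀ (hk₀ : 0 < k₀.im)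
  set δ := k₀.im
  have him : ∀ k ∈ Metric.ball k₀ (δ / 2), δ / 2 < k.im := fun k hk => by
    have := (abs_im_le_norm (k - k₀)).trans_lt (mem_ball_iff_norm.1 hk)
    rw [sub_im, abs_lt] at this
    linarith
  have hderiv : ∀ (y : ℝ) (k : ℂ), HasDerivAt (fun k => K y * cexp (I * k * ↑(y - x)))
      (K y * (cexp (I * k * ↑(y - x)) * (I * ↑(y - x)))) k := fun y k => by
    simpa using (((hasDerivAt_id k).const_mul I).mul_const ((y - x : ℝ) : ℂ)).cexp.const_mul (K y)
  have hbound : ∀ y ∈ Ici x, ∀ k ∈ Metric.ball k₀ (δ / 2),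
      ‖K y * (cexp (I * k * ↑(y - x)) * (I * ↑(y - x)))‖ ≤ 2 / δ * ‖K y‖ := by
    intro y (hy : x ≤ y) k hk
    have hdecay : (y - x) * Real.exp (-(k.im * (y - x))) ≤ 2 / δ :=
      (Real.mul_exp_neg_mul_le_inv ((half_pos hk₀).trans (him k hk)) _).trans (by
        rw [← inv_div]; exact inv_anti₀ (half_pos hk₀) (him k hk).le)
    rw [norm_mul, norm_mul, norm_cexp_I_mul_ofReal, norm_mul, norm_I, one_mul, norm_real,
      Real.norm_of_nonneg (sub_nonneg.2 hy), mul_comm (2 / δ)]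
    gcongr
    linarith
  have hmeas : ∀ k : ℂ, AEStronglyMeasurable (fun y : ℝ => K y * cexp (I * k * ↑(y - x)))
      (volume.restrict (Ici x)) := fun k =>
    hK.aestronglyMeasurable.mul (by fun_prop : Continuous fun y : ℝ =>
      cexp (I * k * ↑(y - x))).aestronglyMeasurable
  exact (hasDerivAt_integral_of_dominated_loc_of_deriv_le
    (F := fun k y => K y * cexp (I * k * ↑(y - x))) (Metric.ball_mem_nhds k₀ (half_pos hk₀))
    (.of_forall hmeas) (integrableOn_mul_cexp hK hk₀.le)
    (hK.aestronglyMeasurable.mul (by fun_prop : Continuous fun y : ℝ =>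
      cexp (I * k₀ * ↑(y - x)) * (I * ↑(y - x))).aestronglyMeasurable)
    (ae_restrict_of_forall_mem measurableSet_Ici hbound) (hK.norm.const_mul _)
    (ae_of_all _ fun y k _ => hderiv y k)).2.differentiableAt.differentiableWithinAt

end UpperHalfPlane

theorem transformation_integral_analytic_general
    (h : ℝ → ℝ) (hpos : ∀ z, 0 ≤ h z)
    (hint : Integrable (fun z => (1 + |z|) * h z))
    (C : ℝ) (x : ℝ)
    (K : ℝ → ℂ) (hK : Measurable K)
    (hbound : ∀ y ≥ x, ‖K y‖ ≤ C * ∫ z in Ici ((x + y) / 2), h z) :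
    (∀ k : ℂ, 0 ≤ k.im →
        IntegrableOn (fun y : ℝ => K y * Complex.exp (Complex.I * k * y)) (Ici x)) ∧
    ContinuousOn (fun k : ℂ => ∫ y in Ici x, K y * Complex.exp (Complex.I * k * y))
      {k : ℂ | 0 ≤ k.im} ∧
    DifferentiableOn ℂ (fun k : ℂ => ∫ y in Ici x, K y * Complex.exp (Complex.I * k * y))
      {k : ℂ | 0 < k.im} := by
  have hKint : IntegrableOn K (Ici x) :=
    ((integrableOn_setIntegral_Ici_midpoint hpos hint x).const_mul C).mono'
      hK.aestronglyMeasurable (ae_restrict_of_forall_mem measurableSet_Ici hbound)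
  have hfactor : ∀ k : ℂ, (fun y : ℝ => K y * cexp (I * k * y)) =
      fun y => cexp (I * k * x) * (K y * cexp (I * k * ↑(y - x))) := fun k => by
    ext y
    rw [mul_left_comm, ← Complex.exp_add]
    push_cast
    ring_nf
  have htransform : (fun k : ℂ => ∫ y in Ici x, K y * cexp (I * k * y)) =
      fun k => cexp (I * k * x) * ∫ y in Ici x, K y * cexp (I * k * ↑(y - x)) := by
    ext k
    rw [hfactor, integral_const_mul]
  refine ⟨fun k hk => hfactor k ▸ (integrableOn_mul_cexp hKint hk).const_mul _, ?_, ?_⟩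
  · rw [htransform]
    exact (by fun_prop : Continuous fun k : ℂ => cexp (I * k * x)).continuousOn.mul
      (continuousOn_setIntegral_mul_cexp hKint)
  · rw [htransform]
    exact (by fun_prop : Differentiable ℂ fun k : ℂ => cexp (I * k * x)).differentiableOn.mul
      (differentiableOn_setIntegral_mul_cexp hKint)

/-- The transformation-operator integral `∫_x^∞ K(y) e^{iky} dy` converges
absolutely for `Im k ≥ 0`, is continuous on the closed upper half plane and
analytic in the open upper half plane, given the standard decay estimate on
`K`. -/
theorem transformation_integral_analytic
    (h : ℝ → ℝ) (hpos : ∀ z, 0 ≤ h z)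
    (hint : Integrable (fun z => (1 + |z|) * h z))
    (C : ℝ) (hC : 0 < C) (x : ℝ)
    (K : ℝ → ℂ) (hK : Measurable K)
    (hbound : ∀ y ≥ x, ‖K y‖ ≤ C * ∫ z in Ici ((x + y) / 2), h z) :
    (∀ k : ℂ, 0 ≤ k.im →
        IntegrableOn (fun y : ℝ => K y * Complex.exp (Complex.I * k * y)) (Ici x)) ∧
    ContinuousOn (fun k : ℂ => ∫ y in Ici x, K y * Complex.exp (Complex.I * k * y))
      {k : ℂ | 0 ≤ k.im} ∧
    DifferentiableOn ℂ (fun k : ℂ => ∫ y in Ici x, K y * Complex.exp (Complex.I * k * y))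
      {k : ℂ | 0 < k.im} :=
  transformation_integral_analytic_general h hpos hint C x K hK hbound
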